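/- Let ν be a Borel probability measure on ℝ with distribution function F(x) = ν((−∞, x]) and quantile function F^{−1}(p) = inf{x ∈ ℝ : F(x) ≥ p}. For each q ∈ (0,1), let v^{(q)} be the weakly increasing word with letters α_k = F^{−1}(1 − q^k), k = 1, 2, ..., and let w^{(q)} = (w^{(q)}_1, w^{(q)}_2, ...) be its infinite q-shuffle. Then for every n ≥ 1 and all points x_1, ..., x_n ∈ ℝ at which F is continuous, lim_{q → 1⁻} P(w^{(q)}_1 ≤ x_1, ..., w^{(q)}_n ≤ x_n) = F(x_1)⋯F(x_n); that is, the n-dimensional marginal laws of P^{(v^{(q)})} converge weakly to the product measure ν^{⊗n} as q → 1⁻. -/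

import Mathlib

/-!
Write `F` for the distribution function of `ν`. The `j`-th letter of the shuffle (0-indexed) is
`v_{σ(j)}` with `ξ_j ≤ σ(j) ≤ ξ_j + j`, since only `j` letters have been taken before. As
`F` is right-continuous, `F⁻¹(p) ≤ y ↔ p ≤ F(y)` for `p ∈ (0,1)`, so `{w_m ≤ x_m}` is the event
`{1 - q^{σ(m)+1} ≤ F(x_m)}`. Replacing `σ(m)` by `ξ_m` or `ξ_m + m` sandwiches the joint event
between two events of the independent `ξ_m` alone. For geometric `ξ` the variable `q^ξ` becomes
uniform on `[0,1]` as `q → 1⁻`, and a bounded shift `b` only costs a factor `q^b → 1`, so both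
bounds tend to `F(x_1)⋯F(x_n)`.
-/

open MeasureTheory ProbabilityTheory Filter

/-- The first `j` values `σ(0), …, σ(j-1)` of the infinite `q`-shuffle permutation driven by
the (0-indexed) geometric choices `x`. -/
noncomputable def shufflePrefix (x : ℕ → ℕ) : ℕ → List ℕ
  | 0 => []
  | j + 1 => shufflePrefix x j ++ [Nat.nth (fun m => m ∉ shufflePrefix x j) (x j)]

/-- The random injection `σ : ℕ → ℕ` driving the infinite `q`-shuffle: `σ(j)` is the
`x j`-th smallest (0-indexed) natural number not in `{σ(0), …, σ(j-1)}`. -/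
noncomputable def shuffleSeq (x : ℕ → ℕ) (j : ℕ) : ℕ :=
  Nat.nth (fun m => m ∉ shufflePrefix x j) (x j)

/-- The distribution function `F(x) = ν((-∞, x])` of a probability measure `ν` on `ℝ`. -/
noncomputable def distFun (ν : Measure ℝ) (x : ℝ) : ℝ := (ν (Set.Iic x)).toReal

/-- The quantile function `F⁻¹(p) = inf {x : F(x) ≥ p}`. -/
noncomputable def quantileFun (ν : Measure ℝ) (p : ℝ) : ℝ := sInf {x : ℝ | p ≤ distFun ν x}

lemma Nat.nth_notMem_le_add_length (L : List ℕ) (k : ℕ) :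
    Nat.nth (· ∉ L) k ≤ k + L.length := by
  refine Nat.lt_add_one_iff.mp (Nat.nth_lt_of_lt_count ?_)
  have hmem : ((Finset.range (k + L.length + 1)).filter (· ∈ L)).card ≤ L.length :=
    (Finset.card_le_card fun m hm => List.mem_toFinset.2 (Finset.mem_filter.1 hm).2).trans
      L.toFinset_card_le
  have hsplit := Finset.card_filter_add_card_filter_not
    (s := Finset.range (k + L.length + 1)) (p := (· ∈ L))
  rw [Finset.card_range] at hsplit
  rw [Nat.count_eq_card_filter_range]
  omega

lemma shufflePrefix_length (x : ℕ → ℕ) (j : ℕ) : (shufflePrefix x j).length = j := by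
  induction j with
  | zero => rfl
  | succ j ih => simp [shufflePrefix, ih]

lemma le_shuffleSeq (x : ℕ → ℕ) (j : ℕ) : x j ≤ shuffleSeq x j :=
  (Nat.nth_strictMono (shufflePrefix x j).finite_toSet.infinite_compl).le_apply

lemma shuffleSeq_le_add (x : ℕ → ℕ) (j : ℕ) : shuffleSeq x j ≤ x j + j := by
  simpa [shuffleSeq, shufflePrefix_length] using
    Nat.nth_notMem_le_add_length (shufflePrefix x j) (x j)

section Quantile

variable (ν : Measure ℝ) [IsProbabilityMeasure ν]

lemma distFun_eq_cdf : distFun ν = cdf ν :=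
  funext fun x => (cdf_eq_real ν x).symm

lemma quantileFun_le_iff {p : ℝ} (hp0 : 0 < p) (hp1 : p < 1) (y : ℝ) :
    quantileFun ν p ≤ y ↔ p ≤ distFun ν y := by
  rw [quantileFun, distFun_eq_cdf]
  have hne : {x | p ≤ cdf ν x}.Nonempty :=
    (((tendsto_cdf_atTop ν).eventually (eventually_gt_nhds hp1)).exists).imp fun _ h => h.le
  have hbdd : BddBelow {x | p ≤ cdf ν x} := by
    obtain ⟨x₀, hx₀⟩ := ((tendsto_cdf_atBot ν).eventually (eventually_lt_nhds hp0)).exists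
    exact ⟨x₀, fun z hz => le_of_not_gt fun hzx => (hz.trans (monotone_cdf ν hzx.le)).not_gt hx₀⟩
  refine ⟨fun h => ?_, fun h => csInf_le hbdd h⟩
  have hright : Tendsto (cdf ν) (nhdsWithin y (Set.Ioi y)) (nhds (cdf ν y)) :=
    ((cdf ν).right_continuous y).mono Set.Ioi_subset_Ici_self
  refine ge_of_tendsto hright ?_
  filter_upwards [self_mem_nhdsWithin] with t ht
  obtain ⟨s, hs, hst⟩ := (csInf_lt_iff hbdd hne).mp (h.trans_lt ht)
  exact hs.trans (monotone_cdf ν hst.le)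

lemma quantileFun_one_sub_pow_le_iff {q : ℝ} (hq : q ∈ Set.Ioo 0 1) (k : ℕ) (y : ℝ) :
    quantileFun ν (1 - q ^ (k + 1)) ≤ y ↔ 1 - q ^ (k + 1) ≤ distFun ν y :=
  quantileFun_le_iff ν (sub_pos.2 (pow_lt_one₀ hq.1.le hq.2 k.succ_ne_zero))
    (sub_lt_self 1 (pow_pos hq.1 _)) y

end Quantile

section Geometric

variable {Ω : Type*} [MeasurableSpace Ω] {μ : Measure Ω} {f : Ω → ℕ} {q : ℝ}

lemma measure_lt_of_geometric (hf : Measurable f) (hq0 : 0 ≤ q) (hq1 : q < 1)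
    (hgeom : ∀ i : ℕ, μ {ω | f ω = i} = ENNReal.ofReal ((1 - q) * q ^ i)) (N : ℕ) :
    μ {ω | f ω < N} = ENNReal.ofReal (1 - q ^ N) := by
  induction N with
  | zero => simp
  | succ N ih =>
    have hset : {ω | f ω < N + 1} = {ω | f ω < N} ∪ {ω | f ω = N} := by
      ext ω
      simp only [Set.mem_union, Set.mem_ofPred_eq]
      omega
    have hdisj : Disjoint {ω | f ω < N} {ω | f ω = N} :=
      Set.disjoint_left.2 fun ω hlt heq => (ne_of_lt hlt) heq
    rw [hset, measure_union hdisj (hf (measurableSet_singleton N)), ih, hgeom,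
      ← ENNReal.ofReal_add (sub_nonneg.2 (pow_le_one₀ hq0 hq1.le))
        (mul_nonneg (sub_nonneg.2 hq1.le) (pow_nonneg hq0 N))]
    ring_nf

/-- With `N` the first `i` such that `p < 1 - q^(i+b)`, the event is `{f < N}`, of probability
`1 - q^N`, and minimality of `N` together with `b ≥ 1` gives `1 - p ≤ q^N < (1 - p) / q^b`. -/
lemma measureReal_one_sub_pow_add_le_mem_Icc (hf : Measurable f) (hq : q ∈ Set.Ioo 0 1)
    (hgeom : ∀ i : ℕ, μ {ω | f ω = i} = ENNReal.ofReal ((1 - q) * q ^ i))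
    {p : ℝ} (hp0 : 0 ≤ p) (hp1 : p < 1) {b : ℕ} (hb : 1 ≤ b) :
    (μ {ω | 1 - q ^ (f ω + b) ≤ p}).toReal ∈ Set.Icc (1 - (1 - p) / q ^ b) p := by
  classical
  have hanti : Antitone (q ^ ·) := pow_right_anti₀ hq.1.le hq.2.le
  have hex : ∃ i, p < 1 - q ^ (i + b) := by
    obtain ⟨i, hi⟩ := exists_pow_lt_of_lt_one (sub_pos.2 hp1) hq.2
    exact ⟨i, by linarith [hanti (Nat.le_add_right i b)]⟩
  set N := Nat.find hex
  have hset : {ω | 1 - q ^ (f ω + b) ≤ p} = {ω | f ω < N} := by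
    ext ω
    simp only [Set.mem_ofPred_eq, N, Nat.lt_find_iff, not_lt]
    exact ⟨fun h m hm => (by linarith [hanti (Nat.add_le_add_right hm b)]), fun h => h _ le_rfl⟩
  rw [hset, measure_lt_of_geometric hf hq.1.le hq.2 hgeom,
    ENNReal.toReal_ofReal (sub_nonneg.2 (pow_le_one₀ hq.1.le hq.2.le))]
  constructor
  · have hN : p < 1 - q ^ N * q ^ b := by rw [← pow_add]; exact Nat.find_spec hex
    have hqb : 0 < q ^ b := pow_pos hq.1 b
    have : q ^ N ≤ (1 - p) / q ^ b := by rw [le_div_iff₀ hqb]; linarith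
    linarith
  · rcases Nat.eq_zero_or_eq_succ_pred N with hN | hN
    · rw [hN, pow_zero, sub_self]; exact hp0
    · have hmin : 1 - q ^ (N.pred + b) ≤ p :=
        not_lt.1 (Nat.find_min hex (by omega : N.pred < N))
      linarith [hanti (show N ≤ N.pred + b by omega)]

end Geometric

section Limit

variable {Ω : ℝ → Type*} [∀ q, MeasurableSpace (Ω q)] {P : ∀ q, Measure (Ω q)}

lemma tendsto_measureReal_one_sub_pow_add_le
    (hprob : ∀ q ∈ Set.Ioo (0 : ℝ) 1, IsProbabilityMeasure (P q))
    {f : ∀ q, Ω q → ℕ} (hf : ∀ q ∈ Set.Ioo (0 : ℝ) 1, Measurable (f q))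
    (hgeom : ∀ q ∈ Set.Ioo (0 : ℝ) 1, ∀ i : ℕ,
      P q {ω | f q ω = i} = ENNReal.ofReal ((1 - q) * q ^ i))
    {p : ℝ} (hp0 : 0 ≤ p) (hp1 : p ≤ 1) {b : ℕ} (hb : 1 ≤ b) :
    Tendsto (fun q : ℝ => (P q {ω | 1 - q ^ (f q ω + b) ≤ p}).toReal)
      (nhdsWithin 1 (Set.Ioo (0 : ℝ) 1)) (nhds p) := by
  rcases hp1.lt_or_eq with hp1 | rfl
  · have hlow : Tendsto (fun q : ℝ => 1 - (1 - p) / q ^ b)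
        (nhdsWithin 1 (Set.Ioo (0 : ℝ) 1)) (nhds p) := by
      have : ContinuousAt (fun q : ℝ => 1 - (1 - p) / q ^ b) 1 := by fun_prop (disch := simp)
      simpa using this.tendsto.mono_left nhdsWithin_le_nhds
    have hbounds : ∀ᶠ q in nhdsWithin 1 (Set.Ioo (0 : ℝ) 1),
        (P q {ω | 1 - q ^ (f q ω + b) ≤ p}).toReal ∈ Set.Icc (1 - (1 - p) / q ^ b) p := by
      filter_upwards [self_mem_nhdsWithin] with q hq
      exact measureReal_one_sub_pow_add_le_mem_Icc (hf q hq) hq (hgeom q hq) hp0 hp1 hb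
    exact tendsto_of_tendsto_of_tendsto_of_le_of_le' hlow tendsto_const_nhds
      (hbounds.mono fun _ h => h.1) (hbounds.mono fun _ h => h.2)
  · refine tendsto_const_nhds.congr' ?_
    filter_upwards [self_mem_nhdsWithin] with q hq
    have := hprob q hq
    have huniv : {ω | 1 - q ^ (f q ω + b) ≤ 1} = Set.univ :=
      Set.eq_univ_of_forall fun ω => by simp [pow_nonneg hq.1.le]
    rw [huniv, measure_univ, ENNReal.toReal_one]

lemma tendsto_measureReal_forall_one_sub_pow_add_le {ι : Type*} [Fintype ι]
    (hprob : ∀ q ∈ Set.Ioo (0 : ℝ) 1, IsProbabilityMeasure (P q))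
    {η : ∀ q, ι → Ω q → ℕ} (hη : ∀ q ∈ Set.Ioo (0 : ℝ) 1, ∀ i, Measurable (η q i))
    (hindep : ∀ q ∈ Set.Ioo (0 : ℝ) 1, iIndepFun (η q) (P q))
    (hgeom : ∀ q ∈ Set.Ioo (0 : ℝ) 1, ∀ i, ∀ k : ℕ,
      P q {ω | η q i ω = k} = ENNReal.ofReal ((1 - q) * q ^ k))
    {p : ι → ℝ} (hp0 : ∀ i, 0 ≤ p i) (hp1 : ∀ i, p i ≤ 1) {b : ι → ℕ} (hb : ∀ i, 1 ≤ b i) :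
    Tendsto (fun q : ℝ => (P q {ω | ∀ i, 1 - q ^ (η q i ω + b i) ≤ p i}).toReal)
      (nhdsWithin 1 (Set.Ioo (0 : ℝ) 1)) (nhds (∏ i, p i)) := by
  refine (tendsto_finsetProd _ fun i _ => tendsto_measureReal_one_sub_pow_add_le hprob
    (fun q hq => hη q hq i) (fun q hq => hgeom q hq i) (hp0 i) (hp1 i) (hb i)).congr' ?_
  filter_upwards [self_mem_nhdsWithin] with q hq
  have hset : {ω | ∀ i, 1 - q ^ (η q i ω + b i) ≤ p i} =
      ⋂ i, η q i ⁻¹' {k | 1 - q ^ (k + b i) ≤ p i} := by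
    ext ω
    simp
  rw [hset, (hindep q hq).meas_iInter fun i => ⟨_, trivial, rfl⟩, ENNReal.toReal_prod]
  rfl

end Limit

/-- Letters are 0-indexed: the `j`-th letter is `F⁻¹(1 - q^{j+1})`, and `ξ q j` is the paper's
`ξ_{j+1} - 1`. -/
theorem stmt_12_general (ν : Measure ℝ) [IsProbabilityMeasure ν]
    (Ω : ℝ → Type*) [∀ q, MeasurableSpace (Ω q)] (P : ∀ q, Measure (Ω q))
    (hprob : ∀ q ∈ Set.Ioo (0 : ℝ) 1, IsProbabilityMeasure (P q))
    (ξ : ∀ q, ℕ → Ω q → ℕ)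
    (hmeas : ∀ q ∈ Set.Ioo (0 : ℝ) 1, ∀ j, Measurable (ξ q j))
    (hindep : ∀ q ∈ Set.Ioo (0 : ℝ) 1, iIndepFun (ξ q) (P q))
    (hgeom : ∀ q ∈ Set.Ioo (0 : ℝ) 1, ∀ j i : ℕ,
      P q {ω | ξ q j ω = i} = ENNReal.ofReal ((1 - q) * q ^ i))
    (n : ℕ) (x : Fin n → ℝ) :
    Tendsto
      (fun q : ℝ => (P q {ω | ∀ m : Fin n,
        quantileFun ν (1 - q ^ (shuffleSeq (fun t => ξ q t ω) (m : ℕ) + 1)) ≤ x m}).toReal)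
      (nhdsWithin 1 (Set.Ioo (0 : ℝ) 1))
      (nhds (∏ m : Fin n, distFun ν (x m))) := by
  have hlimit (b : Fin n → ℕ) (hb : ∀ m, 1 ≤ b m) :=
    tendsto_measureReal_forall_one_sub_pow_add_le (η := fun q (m : Fin n) => ξ q m) hprob
      (fun q hq m => hmeas q hq m)
      (fun q hq => (hindep q hq).precomp Fin.val_injective) (fun q hq m => hgeom q hq m)
      (p := fun m => distFun ν (x m)) (fun m => distFun_eq_cdf ν ▸ cdf_nonneg ν (x m))
      (fun m => distFun_eq_cdf ν ▸ cdf_le_one ν (x m)) hb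
  refine tendsto_of_tendsto_of_tendsto_of_le_of_le' (hlimit (fun m => m + 1) fun _ => le_add_self)
    (hlimit 1 fun _ => le_rfl) ?_ ?_ <;>
  filter_upwards [self_mem_nhdsWithin] with q hq <;>
  have := hprob q hq <;>
  refine measureReal_mono fun ω hω m => ?_ <;>
  simp only [Set.mem_ofPred_eq, Pi.one_apply, quantileFun_one_sub_pow_le_iff ν hq] at hω ⊢
  · exact (sub_le_sub_left (pow_right_anti₀ hq.1.le hq.2.le
      (Nat.add_le_add_right (shuffleSeq_le_add _ m) 1)) 1).trans (hω m)
  · exact (sub_le_sub_left (pow_right_anti₀ hq.1.le hq.2.le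
      (Nat.add_le_add_right (le_shuffleSeq _ m) 1)) 1).trans (hω m)

/-- let `ν` be a probability measure on `ℝ` with distribution function `F` and,
for `q ∈ (0,1)`, let `w^{(q)}` be the infinite `q`-shuffle of the weakly increasing word of
quantiles `α_k = F⁻¹(1 - q^k)`, `k = 1, 2, …` (here the `j`-th letter, `j = 0, 1, …`, is
`F⁻¹(1 - q^{j+1})`).  Then for continuity points `x_1, …, x_n` of `F`,
`P(w^{(q)}_1 ≤ x_1, …, w^{(q)}_n ≤ x_n) → F(x_1)⋯F(x_n)` as `q → 1⁻`; i.e. the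
`n`-dimensional marginals of `P^{(v^{(q)})}` converge weakly to `ν^{⊗n}`.
For each `q ∈ (0,1)`, `ξ q 0, ξ q 1, …` are independent with the (0-indexed) geometric law
`P(ξ = i) = (1-q) q^i` on the probability space `(Ω q, P q)`. -/
theorem stmt_12 (ν : Measure ℝ) [IsProbabilityMeasure ν]
    (Ω : ℝ → Type*) [∀ q, MeasurableSpace (Ω q)] (P : ∀ q, Measure (Ω q))
    (hprob : ∀ q ∈ Set.Ioo (0 : ℝ) 1, IsProbabilityMeasure (P q))
    (ξ : ∀ q, ℕ → Ω q → ℕ)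
    (hmeas : ∀ q ∈ Set.Ioo (0 : ℝ) 1, ∀ j, Measurable (ξ q j))
    (hindep : ∀ q ∈ Set.Ioo (0 : ℝ) 1, iIndepFun (ξ q) (P q))
    (hgeom : ∀ q ∈ Set.Ioo (0 : ℝ) 1, ∀ j i : ℕ,
      P q {ω | ξ q j ω = i} = ENNReal.ofReal ((1 - q) * q ^ i))
    (n : ℕ) (hn : 1 ≤ n) (x : Fin n → ℝ)
    (hx : ∀ m : Fin n, ContinuousAt (distFun ν) (x m)) :
    Tendsto
      (fun q : ℝ => (P q {ω | ∀ m : Fin n,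
        quantileFun ν (1 - q ^ (shuffleSeq (fun t => ξ q t ω) (m : ℕ) + 1)) ≤ x m}).toReal)
      (nhdsWithin 1 (Set.Ioo (0 : ℝ) 1))
      (nhds (∏ m : Fin n, distFun ν (x m))) :=
  stmt_12_general ν Ω P hprob ξ hmeas hindep hgeom n x
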